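/- arXiv:1512.00736 — 3 statements merged into one kernel-verified Lean document; each statement's English description precedes it below -/
import Mathlib

section
/- Let S_0, S_1, ..., S_n be a time-homogeneous Markov chain on a finite state space 𝒮 with transition matrix P. Assume P is irreducible and P(s,s) ≥ η > 0 for all s ∈ 𝒮. Let J = {i ∈ {1,...,n} : S_i ≠ S_{i−1}} denote the set of jump times. Then there exist a natural number n₀ and a real δ > 0 (depending only on P and η, not on n) such that for every n ≥ n₀ and all states s₀, s_n ∈ 𝒮 with P(S_0 = s₀, S_n = s_n) > 0, the conditional expectation satisfies E(|J| | S_0 = s₀, S_n = s_n) ≤ (1 − δ)·n. -/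
/-- The probability of a path `f : Fin (n+1) → S` under a time-homogeneous Markov chain
with initial distribution `ν` and transition matrix `P`. -/
noncomputable def mjpPathWeight {S : Type*} [Fintype S] (n : ℕ) (ν : S → ℝ)
    (P : Matrix S S ℝ) (f : Fin (n + 1) → S) : ℝ :=
  ν (f 0) * ∏ i : Fin n, P (f i.castSucc) (f i.succ)

open Classical in
/-- Probability of the event `E` under the Markov chain path distribution. -/
noncomputable def mjpProb {S : Type*} [Fintype S] (n : ℕ) (ν : S → ℝ)
    (P : Matrix S S ℝ) (E : (Fin (n + 1) → S) → Prop) : ℝ :=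
  ∑ f : Fin (n + 1) → S, if E f then mjpPathWeight n ν P f else 0

open Classical in
/-- Conditional expectation of `g` given the event `E` under the Markov chain
path distribution. -/
noncomputable def mjpCondExp {S : Type*} [Fintype S] (n : ℕ) (ν : S → ℝ)
    (P : Matrix S S ℝ) (g : (Fin (n + 1) → S) → ℝ) (E : (Fin (n + 1) → S) → Prop) : ℝ :=
  (∑ f : Fin (n + 1) → S, if E f then g f * mjpPathWeight n ν P f else 0) / mjpProb n ν P E

/-- `|J|`: the number of indices `i ∈ {1,…,n}` with `S_i ≠ S_{i-1}` along the path `f`. -/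
def numJumps {S : Type*} [DecidableEq S] (n : ℕ) (f : Fin (n + 1) → S) : ℕ :=
  (Finset.univ.filter fun i : Fin n => f i.succ ≠ f i.castSucc).card

/-!
Conditioned on its endpoints `a, b`, the chain stays put at any given step `k` with probability
at least `η β`, where `β > 0` is the smallest entry of some power `P ^ m`: irreducibility and a
positive diagonal make every entry of `P ^ m` positive for `m` large. Indeed, with `D` the
diagonal of `P`, the paths from `a` to `b` that do not move at step `k` have weight
`ν a (P^k D P^(n-1-k)) a b ≥ η ν a (P^(n-1)) a b ≥ η β ν a`, while all paths from `a` to `b`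
together weigh `ν a (P^n) a b ≤ ν a`. Summing the jump probabilities over the `n` steps gives
`E(|J| | a, b) ≤ (1 - η β) n`.
-/

open Finset Matrix

theorem List.prod_ofFn_update_const {M : Type*} [Monoid M] {n : ℕ} (a b : M) (k : Fin n) :
    (List.ofFn (Function.update (fun _ : Fin n => a) k b)).prod
      = a ^ (k : ℕ) * b * a ^ (n - 1 - k) := by
  have hlist : List.ofFn (Function.update (fun _ : Fin n => a) k b)
      = List.replicate k a ++ b :: List.replicate (n - 1 - k) a := by
    refine List.ext_getElem (by simp; omega) fun i _ _ => ?_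
    simp only [List.getElem_ofFn, Function.update_apply, List.getElem_append,
      List.getElem_cons, List.length_replicate, List.getElem_replicate]
    rcases lt_trichotomy i k with h | h | h
    · simp [h, h.ne, Fin.ext_iff]
    · simp [h]
    · simp [Fin.ext_iff, h.ne', h.not_gt, show i - k ≠ 0 by omega]
  simp [hlist, List.prod_append, mul_assoc]

namespace Matrix

variable {S R : Type*} [Fintype S] [DecidableEq S]

theorem sum_path_prod_eq_list_prod_apply [CommSemiring R] :
    ∀ {n : ℕ} (Q : Fin n → Matrix S S R) (a b : S),
      ∑ f : Fin (n + 1) → S, (if f 0 = a ∧ f (Fin.last n) = b then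
        ∏ i, Q i (f i.castSucc) (f i.succ) else 0) = (List.ofFn Q).prod a b
  | 0, Q, a, b => by
    rw [← (Equiv.funUnique (Fin 1) S).symm.sum_comp]
    simp [one_apply, Fin.last, ite_and]
  | n + 1, Q, a, b => by
    rw [← (Fin.consEquiv fun _ => S).sum_comp, Fintype.sum_prod_type, List.ofFn_succ,
      List.prod_cons, mul_apply]
    simp only [← sum_path_prod_eq_list_prod_apply (fun i => Q i.succ), mul_sum]
    conv_rhs => rw [sum_comm]
    simp [Fin.consEquiv, Fin.prod_univ_succ, ite_and]

theorem mul_apply_le_mul_diagonal_mul_apply [CommSemiring R] [PartialOrder R] [IsOrderedRing R]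
    {A B : Matrix S S R} (hA : ∀ i j, 0 ≤ A i j) (hB : ∀ i j, 0 ≤ B i j) {d : S → R} {η : R}
    (hd : ∀ s, η ≤ d s) (a b : S) :
    η * (A * B) a b ≤ (A * diagonal d * B) a b := by
  rw [mul_apply, mul_apply, mul_sum]
  simp only [mul_diagonal]
  refine sum_le_sum fun u _ => ?_
  rw [mul_left_comm, ← mul_assoc]
  exact mul_le_mul_of_nonneg_right (mul_le_mul_of_nonneg_left (hd u) (hA a u)) (hB u b)

theorem le_mul_apply_of_mem_rowStochastic [Semiring R] [PartialOrder R] [IsOrderedRing R]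
    {Q M : Matrix S S R} (hQ : Q ∈ rowStochastic R S) {β : R} (hM : ∀ i j, β ≤ M i j)
    (a b : S) : β ≤ (Q * M) a b :=
  calc β = ∑ t, Q a t * β := by rw [← sum_mul, sum_row_of_mem_rowStochastic hQ, one_mul]
    _ ≤ (Q * M) a b := sum_le_sum fun t _ =>
      mul_le_mul_of_nonneg_left (hM t b) (nonneg_of_mem_rowStochastic hQ)

theorem le_pow_apply_of_forall_le_pow_apply [Semiring R] [PartialOrder R] [IsOrderedRing R]
    {P : Matrix S S R} (hP : P ∈ rowStochastic R S) {β : R} {m k : ℕ}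
    (hβ : ∀ i j, β ≤ (P ^ m) i j) (hmk : m ≤ k) (a b : S) : β ≤ (P ^ k) a b := by
  rw [← Nat.sub_add_cancel hmk, pow_add]
  exact le_mul_apply_of_mem_rowStochastic (pow_mem hP _) hβ a b

section StrictOrderedSemiring

variable [Semiring R] [PartialOrder R] [IsStrictOrderedRing R] {P : Matrix S S R}

theorem pow_apply_pos_of_le (hP : ∀ i j, 0 ≤ P i j) (hdiag : ∀ s, 0 < P s s) {m k : ℕ}
    (hmk : m ≤ k) {a b : S} (h : 0 < (P ^ m) a b) : 0 < (P ^ k) a b := by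
  induction k, hmk using Nat.le_induction with
  | base => exact h
  | succ k _ ih =>
    rw [pow_succ, mul_apply]
    exact (mul_pos ih (hdiag b)).trans_le <| single_le_sum
      (fun t _ => mul_nonneg (pow_apply_nonneg hP k a t) (hP t b)) (mem_univ b)

theorem exists_forall_pow_apply_pos (hP : ∀ i j, 0 ≤ P i j)
    (hirr : ∀ s s', ∃ m, 0 < (P ^ m) s s') (hdiag : ∀ s, 0 < P s s) :
    ∃ m, ∀ s s', 0 < (P ^ m) s s' := by
  choose m hm using hirr
  refine ⟨univ.sup fun p : S × S => m p.1 p.2, fun s s' =>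
    pow_apply_pos_of_le hP hdiag ?_ (hm s s')⟩
  exact le_sup (f := fun p : S × S => m p.1 p.2) (mem_univ (s, s'))

end StrictOrderedSemiring

end Matrix

section MarkovChain

variable {S : Type*} [Fintype S] {n : ℕ} {ν : S → ℝ} {P : Matrix S S ℝ}

theorem mjpProb_endpoints [DecidableEq S] (a b : S) :
    mjpProb n ν P (fun f => f 0 = a ∧ f (Fin.last n) = b) = ν a * (P ^ n) a b := by
  rw [← List.prod_replicate, ← List.ofFn_const, ← sum_path_prod_eq_list_prod_apply, mul_sum,
    mjpProb]
  refine sum_congr rfl fun f _ => ?_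
  split_ifs with h <;> simp_all [mjpPathWeight]

theorem mjpProb_endpoints_stay [DecidableEq S] (a b : S) (k : Fin n) :
    mjpProb n ν P (fun f => (f 0 = a ∧ f (Fin.last n) = b) ∧ f k.succ = f k.castSucc)
      = ν a * (P ^ (k : ℕ) * diagonal P.diag * P ^ (n - 1 - k)) a b := by
  rw [← List.prod_ofFn_update_const, ← sum_path_prod_eq_list_prod_apply, mul_sum, mjpProb]
  refine sum_congr rfl fun f _ => ?_
  have hprod : ∏ i : Fin n, Function.update (fun _ => P) k (diagonal P.diag) i
      (f i.castSucc) (f i.succ)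
      = if f k.succ = f k.castSucc then ∏ i : Fin n, P (f i.castSucc) (f i.succ) else 0 := by
    rw [Fintype.prod_eq_mul_prod_compl k, Fintype.prod_eq_mul_prod_compl k]
    rw [prod_congr rfl fun i hi => by rw [Function.update_of_ne (by simpa using hi)]]
    by_cases h : f k.succ = f k.castSucc
    · simp [h]
    · simp [h, diagonal_apply_ne _ (Ne.symm h)]
  rw [hprod, mjpPathWeight]
  split_ifs <;> simp_all

theorem mjpProb_and_add_mjpProb_and_not (E F : (Fin (n + 1) → S) → Prop) :
    mjpProb n ν P (fun f => E f ∧ F f) + mjpProb n ν P (fun f => E f ∧ ¬F f)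
      = mjpProb n ν P E := by
  rw [mjpProb, mjpProb, mjpProb, ← sum_add_distrib]
  refine sum_congr rfl fun f _ => ?_
  by_cases hE : E f <;> by_cases hF : F f <;> simp [hE, hF]

theorem mjpCondExp_numJumps_le [DecidableEq S] {E : (Fin (n + 1) → S) → Prop} {c : ℝ}
    (hE : 0 < mjpProb n ν P E)
    (h : ∀ i : Fin n, mjpProb n ν P (fun f => E f ∧ f i.succ ≠ f i.castSucc)
      ≤ c * mjpProb n ν P E) :
    mjpCondExp n ν P (fun f => (numJumps n f : ℝ)) E ≤ c * n := by
  rw [mjpCondExp, div_le_iff₀ hE]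
  calc _ = ∑ i : Fin n, mjpProb n ν P (fun f => E f ∧ f i.succ ≠ f i.castSucc) := by
        simp only [mjpProb, numJumps]
        rw [sum_comm]
        refine sum_congr rfl fun f _ => ?_
        by_cases hE : E f <;> simp [hE, card_filter, sum_mul]
    _ ≤ ∑ _i : Fin n, c * mjpProb n ν P E := sum_le_sum fun i _ => h i
    _ = c * n * mjpProb n ν P E := by
      rw [sum_const, card_univ, Fintype.card_fin, nsmul_eq_mul]
      ring

theorem mjpProb_jump_le [DecidableEq S] (hP : P ∈ rowStochastic ℝ S) {η β : ℝ} (hη : 0 ≤ η)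
    (hdiag : ∀ s, η ≤ P s s) (hβ : 0 ≤ β) {a b : S} (ha : 0 ≤ ν a)
    (hβab : β ≤ (P ^ (n - 1)) a b) (k : Fin n) :
    mjpProb n ν P (fun f => (f 0 = a ∧ f (Fin.last n) = b) ∧ f k.succ ≠ f k.castSucc)
      ≤ (1 - η * β) * mjpProb n ν P (fun f => f 0 = a ∧ f (Fin.last n) = b) := by
  have hsplit := mjpProb_and_add_mjpProb_and_not (ν := ν) (P := P)
    (fun f => f 0 = a ∧ f (Fin.last n) = b) (fun f => f k.succ = f k.castSucc)
  have hstay : η * β * mjpProb n ν P (fun f => f 0 = a ∧ f (Fin.last n) = b)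
      ≤ mjpProb n ν P (fun f => (f 0 = a ∧ f (Fin.last n) = b) ∧ f k.succ = f k.castSucc) := by
    rw [mjpProb_endpoints, mjpProb_endpoints_stay]
    calc η * β * (ν a * (P ^ n) a b) = ν a * (η * β) * (P ^ n) a b := by ring
      _ ≤ ν a * (η * β) :=
        mul_le_of_le_one_right (by positivity) (le_one_of_mem_rowStochastic (pow_mem hP n))
      _ ≤ ν a * (η * (P ^ (k + (n - 1 - k))) a b) := by
        rw [Nat.add_sub_cancel' (by omega)]
        gcongr
      _ ≤ ν a * (P ^ (k : ℕ) * diagonal P.diag * P ^ (n - 1 - k)) a b := by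
        rw [pow_add]
        gcongr
        exact mul_apply_le_mul_diagonal_mul_apply
          (pow_apply_nonneg hP.1 _) (pow_apply_nonneg hP.1 _) hdiag a b
  linarith

end MarkovChain

/-- **Two-endpoint jump bound** (Lemma 1 of Miasojedow–Niemiro).
If `P` is an irreducible stochastic matrix on a finite state space with
`P(s,s) ≥ η > 0` for all `s`, then there are `n₀` and `δ > 0` (depending only on `P`
and `η`) such that for every initial distribution, every `n ≥ n₀` and all states
`s₀, sn` with `P(S_0 = s₀, S_n = sn) > 0`, one has
`E(|J| | S_0 = s₀, S_n = sn) ≤ (1 - δ) n`. -/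
theorem two_endpoint_jump_bound
    {S : Type*} [Fintype S] [DecidableEq S]
    (P : Matrix S S ℝ) (η : ℝ)
    (hPnn : ∀ s s' : S, 0 ≤ P s s')
    (hProw : ∀ s : S, ∑ s' : S, P s s' = 1)
    (hirr : ∀ s s' : S, ∃ m : ℕ, 0 < (P ^ m) s s')
    (hη : 0 < η) (hdiag : ∀ s : S, η ≤ P s s) :
    ∃ (n₀ : ℕ) (δ : ℝ), 0 < δ ∧
      ∀ (ν : S → ℝ), (∀ s, 0 ≤ ν s) → (∑ s, ν s = 1) →
        ∀ n : ℕ, n₀ ≤ n → ∀ s₀ sn : S,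
          0 < mjpProb n ν P (fun f => f 0 = s₀ ∧ f (Fin.last n) = sn) →
          mjpCondExp n ν P (fun f => (numJumps n f : ℝ))
              (fun f => f 0 = s₀ ∧ f (Fin.last n) = sn)
            ≤ (1 - δ) * n := by
  rcases isEmpty_or_nonempty S with hS | hS
  · exact ⟨0, 1, one_pos, fun _ _ _ _ _ s₀ => isEmptyElim s₀⟩
  have hP : P ∈ rowStochastic ℝ S := mem_rowStochastic_iff_sum.2 ⟨hPnn, hProw⟩
  obtain ⟨m, hm⟩ := exists_forall_pow_apply_pos hPnn hirr fun s => hη.trans_le (hdiag s)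
  obtain ⟨p, hp⟩ := Finite.exists_min fun p : S × S => (P ^ m) p.1 p.2
  refine ⟨m + 1, η * (P ^ m) p.1 p.2, mul_pos hη (hm _ _), fun ν hν _ n hn a b hpos => ?_⟩
  refine mjpCondExp_numJumps_le hpos fun k => ?_
  exact mjpProb_jump_le hP hη.le hdiag (hm _ _).le (hν a)
    (le_pow_apply_of_forall_le_pow_apply hP (fun i j => hp (i, j)) (by omega) a b) k
end

section
/- Let S_0, S_1, ..., S_n be a time-homogeneous Markov chain on a finite state space 𝒮 with transition matrix P that is irreducible and satisfies P(s,s) ≥ η > 0 for all s ∈ 𝒮, and let n₀ and δ > 0 be as in the two-endpoint jump bound (i.e., such that for every m ≥ n₀ and all states a, b, E(|{i ∈ {1,...,m} : S_i ≠ S_{i−1}}| | S_0 = a, S_m = b) ≤ (1 − δ)m). Let k be fixed, and suppose n ≥ (k+1)·n₀. Then for arbitrary indices 0 ≤ i₁ ≤ i₂ ≤ ... ≤ i_k ≤ n and states s₁, ..., s_k ∈ 𝒮 with P(S_{i₁} = s₁, ..., S_{i_k} = s_k) > 0, one has E(|J| | S_{i₁} = s₁, ..., S_{i_k} = s_k)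 ≤ (1 − δ/(k+1))·n, where J = {i ∈ {1,...,n} : S_i ≠ S_{i−1}}. -/
set_option linter.unusedSectionVars false
set_option linter.unusedVariables false
set_option linter.unnecessarySeqFocus false

namespace MJPaux

variable {S : Type*} [Fintype S] [DecidableEq S]

section Splice

variable (n : ℕ) (u v : Fin (n+1))

def splice (g : Fin (n+1) → S) (m : Fin (v.val - u.val + 1) → S) : Fin (n+1) → S :=
  fun i => if h : u.val ≤ i.val ∧ i.val ≤ v.val then m ⟨i.val - u.val, by omega⟩ else g i

def mid (huv : u.val ≤ v.val) (f : Fin (n+1) → S) : Fin (v.val - u.val + 1) → S :=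
  fun j => f ⟨u.val + j.val, by have := j.isLt; have := v.isLt; omega⟩

def flat (g : Fin (n+1) → S) : Fin (n+1) → S :=
  fun i => if u.val < i.val ∧ i.val < v.val then g u else g i

def Good (g : Fin (n+1) → S) (m : Fin (v.val - u.val + 1) → S) : Prop :=
  (∀ i : Fin (n+1), u.val < i.val → i.val < v.val → g i = g u) ∧
  m 0 = g u ∧ m (Fin.last _) = g v

instance (g : Fin (n+1) → S) (m : Fin (v.val - u.val + 1) → S) :
    Decidable (Good n u v g m) := by unfold Good; infer_instance

variable {n u v}

lemma splice_mid {g : Fin (n+1) → S} {m : Fin (v.val - u.val + 1) → S}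
    (i : Fin (n+1)) (h1 : u.val ≤ i.val) (h2 : i.val ≤ v.val) :
    splice n u v g m i = m ⟨i.val - u.val, by omega⟩ := dif_pos ⟨h1, h2⟩

lemma splice_outer {g : Fin (n+1) → S} {m : Fin (v.val - u.val + 1) → S}
    (hm0 : m 0 = g u) (hml : m (Fin.last _) = g v)
    (i : Fin (n+1)) (hi : i.val ≤ u.val ∨ v.val ≤ i.val) : splice n u v g m i = g i := by
  unfold splice
  split_ifs with h
  · rcases hi with hi | hi
    · have hiu : i = u := Fin.ext (le_antisymm hi h.1)
      have h0 : (⟨i.val - u.val, by omega⟩ : Fin (v.val - u.val + 1)) = 0 := by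
        apply Fin.ext; simp [hiu]
      rw [h0, hm0, hiu]
    · have hiv : i = v := Fin.ext (le_antisymm h.2 hi)
      have h0 : (⟨i.val - u.val, by omega⟩ : Fin (v.val - u.val + 1)) = Fin.last _ := by
        apply Fin.ext; simp [hiv]
      rw [h0, hml, hiv]
  · rfl

lemma mid_apply (huv : u.val ≤ v.val) (f : Fin (n+1) → S) (j : Fin (v.val - u.val + 1)) :
    mid n u v huv f j = f ⟨u.val + j.val, by have := j.isLt; have := v.isLt; omega⟩ := rfl

lemma mid_splice (huv : u.val ≤ v.val) {g : Fin (n+1) → S} {m : Fin (v.val - u.val + 1) → S} :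
    mid n u v huv (splice n u v g m) = m := by
  funext j
  rw [mid_apply]
  have h2 : u.val + j.val ≤ v.val := by have := j.isLt; omega
  rw [splice_mid _ (Nat.le_add_right _ _) h2]
  congr 1
  apply Fin.ext
  show u.val + j.val - u.val = j.val
  omega

lemma flat_splice (huv : u.val ≤ v.val) {g : Fin (n+1) → S} {m : Fin (v.val - u.val + 1) → S}
    (hG : Good n u v g m) : flat n u v (splice n u v g m) = g := by
  obtain ⟨hflat, hm0, hml⟩ := hG
  funext i
  show (if u.val < i.val ∧ i.val < v.val then splice n u v g m u else splice n u v g m i) = g i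
  split_ifs with h
  · rw [splice_outer hm0 hml u (Or.inl le_rfl), (hflat i h.1 h.2).symm]
  · exact splice_outer hm0 hml i (by omega)

lemma splice_flat_mid (huv : u.val ≤ v.val) (f : Fin (n+1) → S) :
    splice n u v (flat n u v f) (mid n u v huv f) = f := by
  funext i
  by_cases h : u.val ≤ i.val ∧ i.val ≤ v.val
  · rw [splice_mid i h.1 h.2, mid_apply]
    congr 1
    apply Fin.ext
    show u.val + (i.val - u.val) = i.val
    omega
  · show (if h : u.val ≤ i.val ∧ i.val ≤ v.val then _ else flat n u v f i) = f i
    rw [dif_neg h]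
    show (if u.val < i.val ∧ i.val < v.val then f u else f i) = f i
    rw [if_neg (by omega)]

lemma good_flat_mid (huv : u.val ≤ v.val) (f : Fin (n+1) → S) :
    Good n u v (flat n u v f) (mid n u v huv f) := by
  have hfu : flat n u v f u = f u := if_neg (by omega)
  have hfv : flat n u v f v = f v := if_neg (by omega)
  refine ⟨fun i h1 h2 => ?_, ?_, ?_⟩
  · show (if u.val < i.val ∧ i.val < v.val then f u else f i) = flat n u v f u
    rw [if_pos ⟨h1, h2⟩, hfu]
  · rw [mid_apply, hfu]
    congr 1
  · rw [mid_apply, hfv]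
    congr 1
    apply Fin.ext
    show u.val + (Fin.last (v.val - u.val)).val = v.val
    simp [Fin.last]
    omega

lemma sum_splice (huv : u.val ≤ v.val) (F : (Fin (n+1) → S) → ℝ) :
    ∑ f : Fin (n+1) → S, F f =
      ∑ g : Fin (n+1) → S, ∑ m : Fin (v.val - u.val + 1) → S,
        if Good n u v g m then F (splice n u v g m) else 0 := by
  have hstep : ∑ p : ((Fin (n+1) → S) × (Fin (v.val - u.val + 1) → S)),
      (if Good n u v p.1 p.2 then F (splice n u v p.1 p.2) else 0) =
      ∑ g : Fin (n+1) → S, ∑ m : Fin (v.val - u.val + 1) → S,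
        if Good n u v g m then F (splice n u v g m) else 0 :=
    Fintype.sum_prod_type _
  rw [← hstep, ← Finset.sum_filter]
  refine Finset.sum_nbij' (fun f => (flat n u v f, mid n u v huv f))
    (fun p => splice n u v p.1 p.2) ?_ ?_ ?_ ?_ ?_
  · intro f _
    simp only [Finset.mem_filter, Finset.mem_univ, true_and]
    exact good_flat_mid huv f
  · intro p _; exact Finset.mem_univ _
  · intro f _
    exact splice_flat_mid huv f
  · intro p hp
    simp only [Finset.mem_filter, Finset.mem_univ, true_and] at hp
    exact Prod.ext (flat_splice huv hp) (mid_splice huv)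
  · intro f _
    rw [splice_flat_mid huv f]

end Splice

section Weights

variable (n : ℕ) (u v : Fin (n+1)) (ν : S → ℝ) (P : Matrix S S ℝ)

def Wout (g : Fin (n+1) → S) : ℝ :=
  ν (g 0) * ∏ i ∈ Finset.univ.filter (fun i : Fin n => i.val < u.val ∨ v.val ≤ i.val),
    P (g i.castSucc) (g i.succ)

def Wmid (m : Fin (v.val - u.val + 1) → S) : ℝ :=
  ∏ j : Fin (v.val - u.val), P (m j.castSucc) (m j.succ)

def Jout (g : Fin (n+1) → S) : ℕ :=
  (Finset.univ.filter fun i : Fin n =>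
    (i.val < u.val ∨ v.val ≤ i.val) ∧ g i.succ ≠ g i.castSucc).card

variable {n u v}

lemma weight_splice (huv : u.val ≤ v.val) {g : Fin (n+1) → S}
    {m : Fin (v.val - u.val + 1) → S} (hG : Good n u v g m) :
    mjpPathWeight n ν P (splice n u v g m) = Wout n u v ν P g * Wmid n u v P m := by
  obtain ⟨hflat, hm0, hml⟩ := hG
  unfold mjpPathWeight Wout Wmid
  have h0 : splice n u v g m 0 = g 0 := splice_outer hm0 hml 0 (Or.inl (by simp))
  rw [h0]
  rw [← Finset.prod_filter_mul_prod_filter_not Finset.univ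
    (fun i : Fin n => i.val < u.val ∨ v.val ≤ i.val)]
  have hA : ∏ i ∈ Finset.univ.filter (fun i : Fin n => i.val < u.val ∨ v.val ≤ i.val),
      P (splice n u v g m i.castSucc) (splice n u v g m i.succ)
      = ∏ i ∈ Finset.univ.filter (fun i : Fin n => i.val < u.val ∨ v.val ≤ i.val),
      P (g i.castSucc) (g i.succ) := by
    apply Finset.prod_congr rfl
    intro i hi
    simp only [Finset.mem_filter, Finset.mem_univ, true_and] at hi
    have hc : splice n u v g m i.castSucc = g i.castSucc :=
      splice_outer hm0 hml _ (by simp only [Fin.coe_castSucc]; omega)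
    have hs : splice n u v g m i.succ = g i.succ :=
      splice_outer hm0 hml _ (by simp only [Fin.val_succ]; omega)
    rw [hc, hs]
  have hB : ∏ i ∈ Finset.univ.filter (fun i : Fin n => ¬(i.val < u.val ∨ v.val ≤ i.val)),
      P (splice n u v g m i.castSucc) (splice n u v g m i.succ)
      = ∏ j : Fin (v.val - u.val), P (m j.castSucc) (m j.succ) := by
    apply Finset.prod_bij (fun (i : Fin n) (hi : i ∈ Finset.univ.filter
        (fun i : Fin n => ¬(i.val < u.val ∨ v.val ≤ i.val))) =>
      (⟨i.val - u.val, by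
        simp only [Finset.mem_filter, Finset.mem_univ, true_and, not_or, not_lt, not_le] at hi
        omega⟩ : Fin (v.val - u.val)))
    · intro a ha; exact Finset.mem_univ _
    · intro a₁ ha₁ a₂ ha₂ h
      simp only [Finset.mem_filter, Finset.mem_univ, true_and, not_or, not_lt, not_le] at ha₁ ha₂
      apply Fin.ext
      have := congrArg Fin.val h
      simp only at this
      omega
    · intro b _
      have hb := b.isLt
      refine ⟨⟨b.val + u.val, by omega⟩, ?_, ?_⟩
      · simp only [Finset.mem_filter, Finset.mem_univ, true_and, not_or, not_lt, not_le]
        omega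
      · apply Fin.ext
        simp only
        omega
    · intro i hi
      simp only [Finset.mem_filter, Finset.mem_univ, true_and, not_or, not_lt, not_le] at hi
      have hc : splice n u v g m i.castSucc = m ⟨i.castSucc.val - u.val, by
          simp only [Fin.coe_castSucc]; omega⟩ :=
        splice_mid _ (by simp only [Fin.coe_castSucc]; omega)
          (by simp only [Fin.coe_castSucc]; omega)
      have hs : splice n u v g m i.succ = m ⟨i.succ.val - u.val, by
          simp only [Fin.val_succ]; omega⟩ :=
        splice_mid _ (by simp only [Fin.val_succ]; omega)
          (by simp only [Fin.val_succ]; omega)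
      rw [hc, hs]
      congr 1 <;>
        exact congrArg m (Fin.ext (by
          simp only [Fin.coe_castSucc, Fin.val_succ, Fin.castSucc_mk, Fin.succ_mk]; try omega))
  rw [hA, hB, mul_assoc]

lemma jumps_splice (huv : u.val ≤ v.val) {g : Fin (n+1) → S}
    {m : Fin (v.val - u.val + 1) → S} (hG : Good n u v g m) :
    numJumps n (splice n u v g m) = Jout n u v g + numJumps (v.val - u.val) m := by
  obtain ⟨hflat, hm0, hml⟩ := hG
  unfold numJumps Jout
  rw [← Finset.card_filter_add_card_filter_not
    (fun i : Fin n => i.val < u.val ∨ v.val ≤ i.val)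
    (s := Finset.univ.filter fun i : Fin n =>
      splice n u v g m i.succ ≠ splice n u v g m i.castSucc)]
  congr 1
  · rw [Finset.filter_filter]
    congr 1
    apply Finset.filter_congr
    intro i _
    by_cases hp : (i.val < u.val ∨ v.val ≤ i.val)
    · have hc : splice n u v g m i.castSucc = g i.castSucc :=
        splice_outer hm0 hml _ (by simp only [Fin.coe_castSucc]; omega)
      have hs : splice n u v g m i.succ = g i.succ :=
        splice_outer hm0 hml _ (by simp only [Fin.val_succ]; omega)
      rw [hc, hs]
      exact and_comm
    · simp [hp]
  · rw [Finset.filter_filter]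
    apply Finset.card_bij (fun (i : Fin n) (hi : i ∈ Finset.univ.filter
        (fun i : Fin n => (splice n u v g m i.succ ≠ splice n u v g m i.castSucc) ∧
          ¬(i.val < u.val ∨ v.val ≤ i.val))) =>
      (⟨i.val - u.val, by
        simp only [Finset.mem_filter, Finset.mem_univ, true_and, not_or, not_lt, not_le] at hi
        omega⟩ : Fin (v.val - u.val)))
    · intro i hi
      simp only [Finset.mem_filter, Finset.mem_univ, true_and, not_or, not_lt, not_le] at hi ⊢
      obtain ⟨hjump, hi1, hi2⟩ := hi
      have hc : splice n u v g m i.castSucc = m ⟨i.castSucc.val - u.val, by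
          simp only [Fin.coe_castSucc]; omega⟩ :=
        splice_mid _ (by simp only [Fin.coe_castSucc]; omega)
          (by simp only [Fin.coe_castSucc]; omega)
      have hs : splice n u v g m i.succ = m ⟨i.succ.val - u.val, by
          simp only [Fin.val_succ]; omega⟩ :=
        splice_mid _ (by simp only [Fin.val_succ]; omega)
          (by simp only [Fin.val_succ]; omega)
      rw [hc, hs] at hjump
      have e1 : (⟨i.succ.val - u.val, by simp only [Fin.val_succ]; omega⟩ :
          Fin (v.val - u.val + 1)) = (Fin.succ ⟨i.val - u.val, by omega⟩) :=
        Fin.ext (by simp only [Fin.coe_castSucc, Fin.val_succ, Fin.castSucc_mk, Fin.succ_mk]; try omega)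
      have e2 : (⟨i.castSucc.val - u.val, by simp only [Fin.coe_castSucc]; omega⟩ :
          Fin (v.val - u.val + 1)) = (Fin.castSucc ⟨i.val - u.val, by omega⟩) :=
        Fin.ext (by simp only [Fin.coe_castSucc, Fin.val_succ, Fin.castSucc_mk, Fin.succ_mk]; try omega)
      rw [e1, e2] at hjump
      exact hjump
    · intro a₁ ha₁ a₂ ha₂ h
      simp only [Finset.mem_filter, Finset.mem_univ, true_and, not_or, not_lt, not_le] at ha₁ ha₂
      apply Fin.ext
      have := congrArg Fin.val h
      simp only at this
      omega
    · intro b hb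
      simp only [Finset.mem_filter, Finset.mem_univ, true_and] at hb
      have hblt := b.isLt
      refine ⟨⟨b.val + u.val, by omega⟩, ?_, ?_⟩
      · simp only [Finset.mem_filter, Finset.mem_univ, true_and, not_or, not_lt, not_le]
        refine ⟨?_, by omega, by omega⟩
        have hc : splice n u v g m (Fin.castSucc ⟨b.val + u.val, by omega⟩) =
            m (Fin.castSucc b) :=
          (splice_mid _ (by simp only [Fin.coe_castSucc]; omega)
            (by simp only [Fin.coe_castSucc]; omega)).trans
            (congrArg m (Fin.ext (by simp only [Fin.coe_castSucc, Fin.castSucc_mk]; try omega)))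
        have hs : splice n u v g m (Fin.succ ⟨b.val + u.val, by omega⟩) =
            m (Fin.succ b) :=
          (splice_mid _ (by simp only [Fin.val_succ]; omega)
            (by simp only [Fin.val_succ]; omega)).trans
            (congrArg m (Fin.ext (by simp only [Fin.val_succ, Fin.succ_mk]; try omega)))
        rw [hc, hs]
        exact hb
      · apply Fin.ext
        simp only
        omega

end Weights

section Mid

variable (n : ℕ) (u v : Fin (n+1))

noncomputable def Mmid (P : Matrix S S ℝ) (a b : S) : ℝ :=
  ∑ m : Fin (v.val - u.val + 1) → S,
    if m 0 = a ∧ m (Fin.last (v.val - u.val)) = b then Wmid n u v P m else 0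

noncomputable def MJmid (P : Matrix S S ℝ) (a b : S) : ℝ :=
  ∑ m : Fin (v.val - u.val + 1) → S,
    if m 0 = a ∧ m (Fin.last (v.val - u.val)) = b then
      (numJumps (v.val - u.val) m : ℝ) * Wmid n u v P m else 0

variable {n u v}

lemma Wmid_nonneg {P : Matrix S S ℝ} (hP : ∀ s s', 0 ≤ P s s')
    (m : Fin (v.val - u.val + 1) → S) : 0 ≤ Wmid n u v P m :=
  Finset.prod_nonneg fun _ _ => hP _ _

lemma Wout_nonneg {ν : S → ℝ} {P : Matrix S S ℝ} (hν : ∀ s, 0 ≤ ν s)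
    (hP : ∀ s s', 0 ≤ P s s') (g : Fin (n+1) → S) : 0 ≤ Wout n u v ν P g :=
  mul_nonneg (hν _) (Finset.prod_nonneg fun _ _ => hP _ _)

lemma Mmid_nonneg {P : Matrix S S ℝ} (hP : ∀ s s', 0 ≤ P s s') (a b : S) :
    0 ≤ Mmid n u v P a b := by
  apply Finset.sum_nonneg
  intro m _
  split_ifs
  · exact Wmid_nonneg hP m
  · exact le_refl 0

lemma Mmid_eq_prob (P : Matrix S S ℝ) (a b : S) :
    Mmid n u v P a b = mjpProb (v.val - u.val) (fun s => if s = a then (1:ℝ) else 0) P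
      (fun f => f 0 = a ∧ f (Fin.last (v.val - u.val)) = b) := by
  unfold Mmid mjpProb mjpPathWeight Wmid
  apply Finset.sum_congr rfl
  intro m _
  by_cases h : m 0 = a ∧ m (Fin.last (v.val - u.val)) = b
  · rw [if_pos h, if_pos h]
    simp [h.1]
  · rw [if_neg h, if_neg h]

lemma MJmid_eq_num (P : Matrix S S ℝ) (a b : S) :
    MJmid n u v P a b = ∑ f : Fin (v.val - u.val + 1) → S,
      if f 0 = a ∧ f (Fin.last (v.val - u.val)) = b then
        (numJumps (v.val - u.val) f : ℝ) *
          mjpPathWeight (v.val - u.val) (fun s => if s = a then (1:ℝ) else 0) P f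
      else 0 := by
  unfold MJmid mjpPathWeight Wmid
  apply Finset.sum_congr rfl
  intro m _
  by_cases h : m 0 = a ∧ m (Fin.last (v.val - u.val)) = b
  · rw [if_pos h, if_pos h]
    simp [h.1]
  · rw [if_neg h, if_neg h]

lemma mid_bound {P : Matrix S S ℝ} (hPnn : ∀ s s', 0 ≤ P s s')
    (n₀ : ℕ) (δ : ℝ)
    (hbound : ∀ (μ : S → ℝ), (∀ s, 0 ≤ μ s) → (∑ s, μ s = 1) →
      ∀ m : ℕ, n₀ ≤ m → ∀ a b : S,
        0 < mjpProb m μ P (fun f => f 0 = a ∧ f (Fin.last m) = b) →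
        mjpCondExp m μ P (fun f => (numJumps m f : ℝ))
            (fun f => f 0 = a ∧ f (Fin.last m) = b) ≤ (1 - δ) * m)
    (hL : n₀ ≤ v.val - u.val) (a b : S) :
    MJmid n u v P a b ≤ (1 - δ) * ((v.val - u.val : ℕ) : ℝ) * Mmid n u v P a b := by
  by_cases hM : 0 < Mmid n u v P a b
  · have hprob : 0 < mjpProb (v.val - u.val) (fun s => if s = a then (1:ℝ) else 0) P
        (fun f => f 0 = a ∧ f (Fin.last (v.val - u.val)) = b) := by
      rw [← Mmid_eq_prob]; exact hM
    have h := hbound (fun s => if s = a then (1:ℝ) else 0)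
      (fun s => by by_cases h : s = a <;> simp [h]) (by simp) (v.val - u.val) hL a b hprob
    unfold mjpCondExp at h
    beta_reduce at h
    rw [← Mmid_eq_prob] at h
    rw [div_le_iff₀ hM] at h
    refine le_trans (le_of_eq ?_) h
    unfold MJmid
    apply Finset.sum_congr rfl
    intro m _
    by_cases hc : m 0 = a ∧ m (Fin.last (v.val - u.val)) = b
    · simp only [if_pos hc]
      simp [Wmid, mjpPathWeight, hc.1]
    · simp only [if_neg hc]
  · have hM0 : Mmid n u v P a b = 0 :=
      le_antisymm (not_lt.mp hM) (Mmid_nonneg hPnn a b)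
    have hterms := (Finset.sum_eq_zero_iff_of_nonneg (fun m _ => by
      split_ifs
      · exact Wmid_nonneg hPnn m
      · exact le_refl 0)).mp hM0
    have hMJ : MJmid n u v P a b = 0 := by
      apply Finset.sum_eq_zero
      intro m _
      have ht := hterms m (Finset.mem_univ m)
      by_cases h : m 0 = a ∧ m (Fin.last (v.val - u.val)) = b
      · rw [if_pos h] at ht
        rw [if_pos h, ht, mul_zero]
      · rw [if_neg h]
    rw [hMJ, hM0, mul_zero]

lemma event_splice {n : ℕ} {u v : Fin (n+1)} {E : (Fin (n+1) → S) → Prop}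
    (hE : ∀ f₁ f₂ : Fin (n+1) → S,
      (∀ i : Fin (n+1), i.val ≤ u.val ∨ v.val ≤ i.val → f₁ i = f₂ i) → E f₁ → E f₂)
    {g : Fin (n+1) → S} {m : Fin (v.val - u.val + 1) → S} (hG : Good n u v g m) :
    E (splice n u v g m) ↔ E g := by
  have hag : ∀ i : Fin (n+1), i.val ≤ u.val ∨ v.val ≤ i.val → splice n u v g m i = g i :=
    fun i hi => splice_outer hG.2.1 hG.2.2 i hi
  exact ⟨hE _ _ hag, hE _ _ (fun i hi => (hag i hi).symm)⟩

lemma card_middle (huv : u.val ≤ v.val) :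
    (Finset.univ.filter fun i : Fin n => ¬(i.val < u.val ∨ v.val ≤ i.val)).card
      = v.val - u.val := by
  have h : (Finset.univ.filter fun i : Fin n => ¬(i.val < u.val ∨ v.val ≤ i.val)).card
      = (Finset.univ : Finset (Fin (v.val - u.val))).card := by
    apply Finset.card_bij (fun (i : Fin n) (hi : i ∈ Finset.univ.filter
        (fun i : Fin n => ¬(i.val < u.val ∨ v.val ≤ i.val))) =>
      (⟨i.val - u.val, by
        simp only [Finset.mem_filter, Finset.mem_univ, true_and, not_or, not_lt, not_le] at hi
        omega⟩ : Fin (v.val - u.val)))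
    · intro a ha; exact Finset.mem_univ _
    · intro a₁ ha₁ a₂ ha₂ h
      simp only [Finset.mem_filter, Finset.mem_univ, true_and, not_or, not_lt, not_le] at ha₁ ha₂
      apply Fin.ext
      have := congrArg Fin.val h
      simp only at this
      omega
    · intro b _
      have hb := b.isLt
      refine ⟨⟨b.val + u.val, by omega⟩, ?_, ?_⟩
      · simp only [Finset.mem_filter, Finset.mem_univ, true_and, not_or, not_lt, not_le]
        omega
      · apply Fin.ext
        simp only
        omega
  rw [h, Finset.card_univ, Fintype.card_fin]

lemma Jout_le (g : Fin (n+1) → S) (huv : u.val ≤ v.val) :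
    Jout n u v g + (v.val - u.val) ≤ n := by
  have h1 : Jout n u v g ≤
      (Finset.univ.filter fun i : Fin n => i.val < u.val ∨ v.val ≤ i.val).card := by
    apply Finset.card_le_card
    intro i hi
    simp only [Finset.mem_filter, Finset.mem_univ, true_and] at hi ⊢
    exact hi.1
  have h2 := Finset.card_filter_add_card_filter_not
    (s := (Finset.univ : Finset (Fin n)))
    (fun i : Fin n => i.val < u.val ∨ v.val ≤ i.val)
  rw [card_middle huv] at h2
  simp only [Finset.card_univ, Fintype.card_fin] at h2
  omega

end Mid

lemma core {n : ℕ} {u v : Fin (n+1)}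
    (P : Matrix S S ℝ) (hPnn : ∀ s s' : S, 0 ≤ P s s')
    (n₀ : ℕ) (δ : ℝ)
    (hbound : ∀ (μ : S → ℝ), (∀ s, 0 ≤ μ s) → (∑ s, μ s = 1) →
      ∀ m : ℕ, n₀ ≤ m → ∀ a b : S,
        0 < mjpProb m μ P (fun f => f 0 = a ∧ f (Fin.last m) = b) →
        mjpCondExp m μ P (fun f => (numJumps m f : ℝ))
            (fun f => f 0 = a ∧ f (Fin.last m) = b) ≤ (1 - δ) * m)
    (ν : S → ℝ) (hν0 : ∀ s, 0 ≤ ν s)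
    (huv : u.val ≤ v.val) (hL : n₀ ≤ v.val - u.val)
    (E : (Fin (n+1) → S) → Prop)
    (hE : ∀ f₁ f₂ : Fin (n+1) → S,
      (∀ i : Fin (n+1), i.val ≤ u.val ∨ v.val ≤ i.val → f₁ i = f₂ i) → E f₁ → E f₂)
    (hpos : 0 < mjpProb n ν P E) :
    mjpCondExp n ν P (fun f => (numJumps n f : ℝ)) E
      ≤ (n : ℝ) - δ * ((v.val - u.val : ℕ) : ℝ) := by
  classical
  unfold mjpCondExp
  rw [div_le_iff₀ hpos]
  unfold mjpProb
  rw [sum_splice huv (fun f => if E f then (numJumps n f : ℝ) * mjpPathWeight n ν P f else 0),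
      sum_splice huv (fun f => if E f then mjpPathWeight n ν P f else 0),
      Finset.mul_sum]
  apply Finset.sum_le_sum
  intro g _
  by_cases hFE : (∀ i : Fin (n+1), u.val < i.val → i.val < v.val → g i = g u) ∧ E g
  · obtain ⟨hFlat, hEg⟩ := hFE
    have hterm1 : ∀ m : Fin (v.val - u.val + 1) → S,
        (if Good n u v g m then
          (if E (splice n u v g m) then
            (numJumps n (splice n u v g m) : ℝ) * mjpPathWeight n ν P (splice n u v g m)
          else 0) else 0)
        = Wout n u v ν P g * ((Jout n u v g : ℝ) *
            (if m 0 = g u ∧ m (Fin.last (v.val - u.val)) = g v then Wmid n u v P m else 0))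
          + Wout n u v ν P g *
            (if m 0 = g u ∧ m (Fin.last (v.val - u.val)) = g v then
              (numJumps (v.val - u.val) m : ℝ) * Wmid n u v P m else 0) := by
      intro m
      by_cases hGd : Good n u v g m
      · have hEs : E (splice n u v g m) := (event_splice hE hGd).mpr hEg
        rw [if_pos hGd, if_pos hEs, if_pos hGd.2, if_pos hGd.2,
          weight_splice ν P huv hGd, jumps_splice huv hGd]
        push_cast
        ring
      · have hBd : ¬(m 0 = g u ∧ m (Fin.last (v.val - u.val)) = g v) :=
          fun hBd => hGd ⟨hFlat, hBd⟩
        rw [if_neg hGd, if_neg hBd, if_neg hBd]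
        ring
    have hterm2 : ∀ m : Fin (v.val - u.val + 1) → S,
        (if Good n u v g m then
          (if E (splice n u v g m) then mjpPathWeight n ν P (splice n u v g m) else 0) else 0)
        = Wout n u v ν P g *
            (if m 0 = g u ∧ m (Fin.last (v.val - u.val)) = g v then Wmid n u v P m else 0) := by
      intro m
      by_cases hGd : Good n u v g m
      · have hEs : E (splice n u v g m) := (event_splice hE hGd).mpr hEg
        rw [if_pos hGd, if_pos hEs, if_pos hGd.2, weight_splice ν P huv hGd]
      · have hBd : ¬(m 0 = g u ∧ m (Fin.last (v.val - u.val)) = g v) :=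
          fun hBd => hGd ⟨hFlat, hBd⟩
        rw [if_neg hGd, if_neg hBd, mul_zero]
    rw [Finset.sum_congr rfl (fun m _ => hterm1 m),
        Finset.sum_congr rfl (fun m _ => hterm2 m),
        Finset.sum_add_distrib, ← Finset.mul_sum, ← Finset.mul_sum, ← Finset.mul_sum,
        ← Finset.mul_sum]
    have hMdef : (∑ m : Fin (v.val - u.val + 1) → S,
        if m 0 = g u ∧ m (Fin.last (v.val - u.val)) = g v then Wmid n u v P m else 0)
        = Mmid n u v P (g u) (g v) := rfl
    have hMJdef : (∑ m : Fin (v.val - u.val + 1) → S,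
        if m 0 = g u ∧ m (Fin.last (v.val - u.val)) = g v then
          (numJumps (v.val - u.val) m : ℝ) * Wmid n u v P m else 0)
        = MJmid n u v P (g u) (g v) := rfl
    rw [hMdef, hMJdef]
    have h3 : 0 ≤ Mmid n u v P (g u) (g v) := Mmid_nonneg hPnn _ _
    have h4 : 0 ≤ Wout n u v ν P g := Wout_nonneg hν0 hPnn g
    have h1 : (Jout n u v g : ℝ) ≤ (n : ℝ) - ((v.val - u.val : ℕ) : ℝ) := by
      have hj := Jout_le g huv
      have : ((Jout n u v g : ℕ) : ℝ) + ((v.val - u.val : ℕ) : ℝ) ≤ (n : ℝ) := by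
        exact_mod_cast hj
      linarith
    have h2 : MJmid n u v P (g u) (g v) ≤
        (1 - δ) * ((v.val - u.val : ℕ) : ℝ) * Mmid n u v P (g u) (g v) :=
      mid_bound hPnn n₀ δ hbound hL _ _
    calc Wout n u v ν P g * ((Jout n u v g : ℝ) * Mmid n u v P (g u) (g v))
          + Wout n u v ν P g * MJmid n u v P (g u) (g v)
        ≤ Wout n u v ν P g * (((n : ℝ) - ((v.val - u.val : ℕ) : ℝ)) * Mmid n u v P (g u) (g v))
          + Wout n u v ν P g *
            ((1 - δ) * ((v.val - u.val : ℕ) : ℝ) * Mmid n u v P (g u) (g v)) := by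
          apply add_le_add
          · exact mul_le_mul_of_nonneg_left (mul_le_mul_of_nonneg_right h1 h3) h4
          · exact mul_le_mul_of_nonneg_left h2 h4
      _ = ((n : ℝ) - δ * ((v.val - u.val : ℕ) : ℝ)) *
            (Wout n u v ν P g * Mmid n u v P (g u) (g v)) := by ring
  · have hz1 : (∑ m : Fin (v.val - u.val + 1) → S,
        if Good n u v g m then
          (if E (splice n u v g m) then
            (numJumps n (splice n u v g m) : ℝ) * mjpPathWeight n ν P (splice n u v g m)
          else 0) else 0) = 0 := by
      apply Finset.sum_eq_zero
      intro m _
      by_cases hGd : Good n u v g m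
      · have hEs : ¬ E (splice n u v g m) := fun h =>
          hFE ⟨hGd.1, (event_splice hE hGd).mp h⟩
        rw [if_pos hGd, if_neg hEs]
      · rw [if_neg hGd]
    have hz2 : (∑ m : Fin (v.val - u.val + 1) → S,
        if Good n u v g m then
          (if E (splice n u v g m) then mjpPathWeight n ν P (splice n u v g m) else 0)
        else 0) = 0 := by
      apply Finset.sum_eq_zero
      intro m _
      by_cases hGd : Good n u v g m
      · have hEs : ¬ E (splice n u v g m) := fun h =>
          hFE ⟨hGd.1, (event_splice hE hGd).mp h⟩
        rw [if_pos hGd, if_neg hEs]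
      · rw [if_neg hGd]
    rw [hz1, hz2, mul_zero]

end MJPaux

/-- **Jump bound given observations at `k` fixed time points**
(Lemma 2 of Miasojedow–Niemiro). Let `P` be irreducible and stochastic with
`P(s,s) ≥ η > 0`, and let `n₀`, `δ > 0` satisfy the two-endpoint jump bound
(for every initial distribution, every stretch length `m ≥ n₀` and all endpoint
states of positive probability). If `n ≥ (k+1)·n₀`, then for arbitrary monotone
indices `0 ≤ i₁ ≤ ⋯ ≤ i_k ≤ n` and states `s₁, …, s_k` with
`P(S_{i₁} = s₁, …, S_{i_k} = s_k) > 0`, we have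
`E(|J| | S_{i₁} = s₁, …, S_{i_k} = s_k) ≤ (1 - δ/(k+1)) n`. -/
theorem jump_bound_given_observations
    {S : Type*} [Fintype S] [DecidableEq S]
    (P : Matrix S S ℝ) (η : ℝ)
    (hPnn : ∀ s s' : S, 0 ≤ P s s')
    (hProw : ∀ s : S, ∑ s' : S, P s s' = 1)
    (hirr : ∀ s s' : S, ∃ m : ℕ, 0 < (P ^ m) s s')
    (hη : 0 < η) (hdiag : ∀ s : S, η ≤ P s s)
    (n₀ : ℕ) (δ : ℝ) (hδ : 0 < δ)
    (hbound : ∀ (μ : S → ℝ), (∀ s, 0 ≤ μ s) → (∑ s, μ s = 1) →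
      ∀ m : ℕ, n₀ ≤ m → ∀ a b : S,
        0 < mjpProb m μ P (fun f => f 0 = a ∧ f (Fin.last m) = b) →
        mjpCondExp m μ P (fun f => (numJumps m f : ℝ))
            (fun f => f 0 = a ∧ f (Fin.last m) = b) ≤ (1 - δ) * m)
    (ν : S → ℝ) (hν0 : ∀ s, 0 ≤ ν s) (hν1 : ∑ s, ν s = 1)
    (k n : ℕ) (hn : (k + 1) * n₀ ≤ n)
    (idx : Fin k → Fin (n + 1)) (hidx : Monotone idx)
    (obs : Fin k → S)
    (hpos : 0 < mjpProb n ν P (fun f => ∀ j : Fin k, f (idx j) = obs j)) :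
    mjpCondExp n ν P (fun f => (numJumps n f : ℝ))
        (fun f => ∀ j : Fin k, f (idx j) = obs j)
      ≤ (1 - δ / (k + 1)) * n := by

  classical
  set T : ℕ → ℕ := fun j =>
    if h0 : j = 0 then 0 else if h : j ≤ k then (idx ⟨j-1, by omega⟩).val else n with hT
  have hT0 : T 0 = 0 := by simp [hT]
  have hTlast : T (k+1) = n := by
    simp only [hT]
    rw [dif_neg (by omega), dif_neg (by omega)]
  have hTle : ∀ j, T j ≤ n := by
    intro j
    simp only [hT]
    split_ifs with h1 h2
    · omega
    · exact Fin.is_le _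
    · exact le_refl n
  have hmono : ∀ j, T j ≤ T (j+1) := by
    intro j
    by_cases h0 : j = 0
    · subst h0; rw [hT0]; exact Nat.zero_le _
    · by_cases h1 : j + 1 ≤ k
      · have e1 : T j = (idx ⟨j-1, by omega⟩).val := by
          simp only [hT]; rw [dif_neg h0, dif_pos (by omega)]
        have e2 : T (j+1) = (idx ⟨j, by omega⟩).val := by
          simp only [hT]
          rw [dif_neg (by omega), dif_pos h1]
          simp
        rw [e1, e2]
        exact Fin.le_def.mp (hidx (Fin.le_def.mpr (by simp; try omega)))
      · have e2 : T (j+1) = n := by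
          simp only [hT]; rw [dif_neg (by omega), dif_neg (by omega)]
        rw [e2]; exact hTle j
  have hmonoT : Monotone T := monotone_nat_of_le_succ hmono
  have htel : ∀ N : ℕ, ∑ j ∈ Finset.range N, (T (j+1) - T j) = T N - T 0 := by
    intro N
    induction N with
    | zero => simp
    | succ N ih =>
        rw [Finset.sum_range_succ, ih]
        have h1 : T 0 ≤ T N := hmonoT (Nat.zero_le N)
        have h2 : T N ≤ T (N+1) := hmono N
        omega
  have htel' : ∑ j ∈ Finset.range (k+1), (T (j+1) - T j) = n := by
    rw [htel, hT0, hTlast]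
    omega
  obtain ⟨j, hjk, hgap⟩ : ∃ j, j < k+1 ∧ n ≤ (k+1) * (T (j+1) - T j) := by
    by_contra hcon
    push_neg at hcon
    have hn1 : 1 ≤ n := by have := hcon 0 (by omega); omega
    have h1 : (k+1) * n = ∑ j ∈ Finset.range (k+1), (k+1) * (T (j+1) - T j) := by
      rw [← Finset.mul_sum, htel']
    have h2 : ∑ j ∈ Finset.range (k+1), (k+1) * (T (j+1) - T j)
        ≤ ∑ _j ∈ Finset.range (k+1), (n-1) :=
      Finset.sum_le_sum (fun j hj => by
        have := hcon j (Finset.mem_range.mp hj); omega)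
    rw [Finset.sum_const, Finset.card_range, smul_eq_mul] at h2
    have h3 : (k+1) * n ≤ (k+1) * (n-1) := by rw [h1]; exact h2
    have h4 := Nat.le_of_mul_le_mul_left h3 (by omega : 0 < k+1)
    omega
  have hloc0 : ∀ j' : Fin k, (idx j').val ≤ T j ∨ T (j+1) ≤ (idx j').val := by
    intro j'
    by_cases hj' : j'.val + 1 ≤ j
    · left
      have hTj : T j = (idx ⟨j-1, by omega⟩).val := by
        simp only [hT]; rw [dif_neg (by omega), dif_pos (by omega)]
      rw [hTj]
      exact Fin.le_def.mp (hidx (Fin.le_def.mpr (by simp; try omega)))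
    · right
      have hj1k : j + 1 ≤ k := by have := j'.isLt; omega
      have hTj : T (j+1) = (idx ⟨j, by omega⟩).val := by
        simp only [hT]; rw [dif_neg (by omega), dif_pos hj1k]; simp
      rw [hTj]
      exact Fin.le_def.mp (hidx (Fin.le_def.mpr (by simp; try omega)))
  set u : Fin (n+1) := ⟨T j, by have := hTle j; omega⟩ with hu
  set v : Fin (n+1) := ⟨T (j+1), by have := hTle (j+1); omega⟩ with hv
  have huv : u.val ≤ v.val := hmono j
  have hgap' : n ≤ (k+1) * (v.val - u.val) := hgap
  have hLn₀ : n₀ ≤ v.val - u.val :=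
    Nat.le_of_mul_le_mul_left (le_trans hn hgap') (by omega)
  have hloc : ∀ j' : Fin k, (idx j').val ≤ u.val ∨ v.val ≤ (idx j').val := hloc0
  have hcore := MJPaux.core (u := u) (v := v) P hPnn n₀ δ hbound ν hν0 huv hLn₀
    (fun f => ∀ j : Fin k, f (idx j) = obs j)
    (fun f₁ f₂ hag hEf j' => by rw [← hag (idx j') (hloc j')]; exact hEf j')
    hpos
  refine le_trans hcore ?_
  have hkpos : (0:ℝ) < (k:ℝ) + 1 := by positivity
  have hgapR : (n:ℝ) ≤ ((k:ℝ)+1) * ((v.val - u.val : ℕ) : ℝ) := by exact_mod_cast hgap'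
  have hdivle : (n:ℝ) / ((k:ℝ)+1) ≤ ((v.val - u.val : ℕ):ℝ) := by
    rw [div_le_iff₀ hkpos]; nlinarith
  have hmul : δ * ((n:ℝ)/((k:ℝ)+1)) ≤ δ * ((v.val - u.val : ℕ):ℝ) :=
    mul_le_mul_of_nonneg_left hdivle (le_of_lt hδ)
  have expand : (1 - δ/((k:ℝ)+1)) * (n:ℝ) = (n:ℝ) - δ * ((n:ℝ)/((k:ℝ)+1)) := by ring
  rw [expand]
  linarith
end

section
/- Let S_0, S_1, ..., S_n be a time-homogeneous Markov chain on a finite state space 𝒮 with transition matrix P that is irreducible and satisfies P(s,s) ≥ η > 0 for all s, and let n₀, δ > 0 be such that the two-endpoint jump bound holds (E(|J| over any stretch of length m ≥ n₀| endpoints) ≤ (1−δ)m). Fix k, indices 0 ≤ i₁ ≤ ... ≤ i_k ≤ n, and suppose n ≥ (k+1)·n₀. Let E be any event of positive probability that is measurable with respect to (S_{i₁}, ..., S_{i_k}) (i.e., E is a union of events of the form {S_{i₁}=s₁, ..., S_{i_k}=s_k}). Then E(|J| | E) ≤ (1 − δ/(k+1))·n, where J = {i ∈ {1,...,n} : S_i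 ≠ S_{i−1}}. -/
/-! Among the `k + 1` gaps between consecutive observation times (with `0` and `n` added), one,
say `[p, p + m]`, has length `m ≥ n / (k + 1) ≥ n₀`. The event only sees the states outside the
open gap, and given those states the path inside the gap is a bridge from `S_p` to `S_{p+m}`.
This Markov property is proved by double counting over pairs (path, bridge), using the
involution that swaps the segment of the path on the gap with the bridge. So the expected number
of jumps inside the gap is at most `(1 - δ) m` by the two-endpoint bound, while outside it there
are at most `n - m` jumps; in total at most `n - δ m ≤ (1 - δ / (k + 1)) n`. -/

open Finset

section PathSurgery

variable {S : Type*} {n p m : ℕ}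

def segmentEmb (hpm : p + m ≤ n) : Fin m ↪ Fin n :=
  (Fin.natAddEmb p).trans (Fin.castLEEmb hpm)

lemma mem_map_segmentEmb (hpm : p + m ≤ n) (i : Fin n) :
    i ∈ univ.map (segmentEmb hpm) ↔ p ≤ i ∧ (i : ℕ) < p + m := by
  simp only [mem_map, mem_univ, true_and]
  constructor
  · rintro ⟨j, rfl⟩
    simp [segmentEmb]
  · rintro ⟨h₁, h₂⟩
    exact ⟨⟨i - p, by omega⟩, Fin.ext (by simp [segmentEmb]; omega)⟩

def pathSegment (hpm : p + m ≤ n) (f : Fin (n + 1) → S) : Fin (m + 1) → S :=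
  fun i => f (Fin.castLE (Nat.succ_le_succ hpm) (Fin.natAdd p i))

def pathSplice (p : ℕ) (f : Fin (n + 1) → S) (h : Fin (m + 1) → S) :
    Fin (n + 1) → S :=
  fun i => if hi : p ≤ i ∧ (i : ℕ) ≤ p + m then h ⟨i - p, by omega⟩ else f i

@[simp]
lemma pathSegment_pathSplice (hpm : p + m ≤ n) (f : Fin (n + 1) → S) (h : Fin (m + 1) → S) :
    pathSegment hpm (pathSplice p f h) = h := by
  ext i
  simp [pathSegment, pathSplice, i.is_le]

@[simp]
lemma pathSplice_pathSplice_pathSegment (hpm : p + m ≤ n) (f : Fin (n + 1) → S)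
    (h : Fin (m + 1) → S) : pathSplice p (pathSplice p f h) (pathSegment hpm f) = f := by
  ext i
  by_cases hi : p ≤ i ∧ (i : ℕ) ≤ p + m
  · simp only [pathSplice, pathSegment, dif_pos hi]
    congr 1
    exact Fin.ext (by simp; omega)
  · simp [pathSplice, dif_neg hi]

lemma pathSplice_apply_of_le_or_le (hpm : p + m ≤ n) {f : Fin (n + 1) → S}
    {h : Fin (m + 1) → S} (h₀ : h 0 = pathSegment hpm f 0)
    (hₘ : h (Fin.last m) = pathSegment hpm f (Fin.last m)) {i : Fin (n + 1)}
    (hi : (i : ℕ) ≤ p ∨ p + m ≤ i) : pathSplice p f h i = f i := by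
  unfold pathSplice
  unfold pathSegment at h₀ hₘ
  split_ifs with hmid
  · rcases hi with hi | hi
    · convert h₀ using 2 <;> rw [Fin.ext_iff] <;> simp <;> omega
    · convert hₘ using 2 <;> rw [Fin.ext_iff] <;> simp <;> omega
  · rfl

lemma pathSplice_pathSegment_involutive (hpm : p + m ≤ n) :
    Function.Involutive fun x : (Fin (n + 1) → S) × (Fin (m + 1) → S) =>
      (pathSplice p x.1 x.2, pathSegment hpm x.1) := by
  intro x
  simp

lemma sum_pathSplice_pathSegment [Fintype S] {M : Type*} [AddCommMonoid M]
    (hpm : p + m ≤ n) (Ψ : (Fin (n + 1) → S) → (Fin (m + 1) → S) → M) :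
    ∑ f, ∑ h : Fin (m + 1) → S, Ψ (pathSplice p f h) (pathSegment hpm f) =
      ∑ f, ∑ h, Ψ f h := by
  rw [← Fintype.sum_prod_type', ← Fintype.sum_prod_type']
  exact Equiv.sum_comp (Function.Involutive.toPerm _ (pathSplice_pathSegment_involutive hpm))
    fun x : (Fin (n + 1) → S) × (Fin (m + 1) → S) => Ψ x.1 x.2

lemma numJumps_le_pathSegment_add [DecidableEq S] (hpm : p + m ≤ n) (f : Fin (n + 1) → S) :
    numJumps n f ≤ numJumps m (pathSegment hpm f) + (n - m) := by
  have hsub : univ.filter (fun i : Fin n => f i.succ ≠ f i.castSucc) ⊆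
      (univ.filter fun j : Fin m => pathSegment hpm f j.succ ≠ pathSegment hpm f j.castSucc).map
        (segmentEmb hpm) ∪ (univ.map (segmentEmb hpm))ᶜ := by
    intro i hi
    by_cases hmem : i ∈ univ.map (segmentEmb hpm)
    · obtain ⟨j, -, rfl⟩ := mem_map.mp hmem
      refine mem_union_left _ (mem_map_of_mem _ ?_)
      exact mem_filter.mpr ⟨mem_univ _, (mem_filter.mp hi).2⟩
    · exact mem_union_right _ (mem_compl.mpr hmem)
  calc numJumps n f ≤ _ := card_le_card hsub
    _ ≤ _ := card_union_le _ _
    _ = _ := by rw [card_map, card_compl, card_map, card_univ, Fintype.card_fin,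
      Fintype.card_fin]; rfl

end PathSurgery

section Weights

variable {S : Type*} {n p m : ℕ}

def transitionProd (P : Matrix S S ℝ) (m : ℕ) (h : Fin (m + 1) → S) : ℝ :=
  ∏ i : Fin m, P (h i.castSucc) (h i.succ)

lemma transitionProd_nonneg {P : Matrix S S ℝ} (hP : ∀ s s', 0 ≤ P s s')
    (h : Fin (m + 1) → S) : 0 ≤ transitionProd P m h :=
  prod_nonneg fun _ _ => hP _ _

def outerWeight (ν : S → ℝ) (P : Matrix S S ℝ) (hpm : p + m ≤ n) (f : Fin (n + 1) → S) : ℝ :=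
  ν (f 0) * ∏ i ∈ (univ.map (segmentEmb hpm))ᶜ, P (f i.castSucc) (f i.succ)

lemma outerWeight_pathSplice (ν : S → ℝ) (P : Matrix S S ℝ) (hpm : p + m ≤ n)
    {f : Fin (n + 1) → S} {h : Fin (m + 1) → S} (h₀ : h 0 = pathSegment hpm f 0)
    (hₘ : h (Fin.last m) = pathSegment hpm f (Fin.last m)) :
    outerWeight ν P hpm (pathSplice p f h) = outerWeight ν P hpm f := by
  have hout (i : Fin (n + 1)) (hi : (i : ℕ) ≤ p ∨ p + m ≤ i) :=
    pathSplice_apply_of_le_or_le hpm h₀ hₘ hi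
  rw [outerWeight, outerWeight, hout 0 (Or.inl (Nat.zero_le p))]
  congr 1
  refine prod_congr rfl fun i hi => ?_
  have hi' := (mem_map_segmentEmb hpm i).not.mp (mem_compl.mp hi)
  rw [hout _ (by simp; omega), hout _ (by simp; omega)]

variable [Fintype S]

lemma mjpPathWeight_nonneg {ν : S → ℝ} {P : Matrix S S ℝ} (hν : ∀ s, 0 ≤ ν s)
    (hP : ∀ s s', 0 ≤ P s s') (f : Fin (n + 1) → S) : 0 ≤ mjpPathWeight n ν P f :=
  mul_nonneg (hν _) (transitionProd_nonneg hP f)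

lemma mjpPathWeight_eq_outerWeight_mul (ν : S → ℝ) (P : Matrix S S ℝ) (hpm : p + m ≤ n)
    (f : Fin (n + 1) → S) :
    mjpPathWeight n ν P f = outerWeight ν P hpm f * transitionProd P m (pathSegment hpm f) := by
  rw [mjpPathWeight, outerWeight, transitionProd, mul_assoc,
    ← prod_compl_mul_prod (univ.map (segmentEmb hpm)), prod_map]
  rfl

end Weights

section ConditionalExpectation

variable {S : Type*} [Fintype S] {n : ℕ} {ν : S → ℝ} {P : Matrix S S ℝ}
  {E : (Fin (n + 1) → S) → Prop}

lemma mjpProb_nonneg (hν : ∀ s, 0 ≤ ν s) (hP : ∀ s s', 0 ≤ P s s') :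
    0 ≤ mjpProb n ν P E := by
  unfold mjpProb
  exact sum_nonneg fun f _ => by split_ifs <;> simp [mjpPathWeight_nonneg hν hP f]

lemma mjpCondExp_mono (hν : ∀ s, 0 ≤ ν s) (hP : ∀ s s', 0 ≤ P s s')
    {g₁ g₂ : (Fin (n + 1) → S) → ℝ}
    (hg : ∀ f, E f → mjpPathWeight n ν P f ≠ 0 → g₁ f ≤ g₂ f) :
    mjpCondExp n ν P g₁ E ≤ mjpCondExp n ν P g₂ E := by
  unfold mjpCondExp
  refine div_le_div_of_nonneg_right (sum_le_sum fun f _ => ?_) (mjpProb_nonneg hν hP)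
  split_ifs with hf
  · rcases eq_or_ne (mjpPathWeight n ν P f) 0 with hw | hw
    · simp [hw]
    · exact mul_le_mul_of_nonneg_right (hg f hf hw) (mjpPathWeight_nonneg hν hP f)
  · rfl

lemma mjpCondExp_add_const (hE : mjpProb n ν P E ≠ 0) (g : (Fin (n + 1) → S) → ℝ) (c : ℝ) :
    mjpCondExp n ν P (fun f => g f + c) E = mjpCondExp n ν P g E + c := by
  rw [mjpCondExp, mjpCondExp, div_add' _ _ _ hE, mjpProb, mul_sum, ← sum_add_distrib]
  congr 1
  refine sum_congr rfl fun f _ => ?_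
  split_ifs <;> ring

lemma mjpCondExp_const (hE : mjpProb n ν P E ≠ 0) (c : ℝ) :
    mjpCondExp n ν P (fun _ => c) E = c := by
  simpa [mjpCondExp] using mjpCondExp_add_const hE (fun _ => 0) c

end ConditionalExpectation

section Bridge

variable {S : Type*} [DecidableEq S] {n p m : ℕ} {P : Matrix S S ℝ}

lemma pi_single_one_nonneg (a s : S) : 0 ≤ (Pi.single a 1 : S → ℝ) s := by
  rw [Pi.single_apply]
  split_ifs <;> norm_num

variable [Fintype S]

noncomputable def bridgeMass (P : Matrix S S ℝ) (m : ℕ) (a b : S) : ℝ :=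
  mjpProb m (Pi.single a 1) P fun h => h 0 = a ∧ h (Fin.last m) = b

noncomputable def bridgeMean (P : Matrix S S ℝ) (m : ℕ) (G : (Fin (m + 1) → S) → ℝ) (a b : S) : ℝ :=
  mjpCondExp m (Pi.single a 1) P G fun h => h 0 = a ∧ h (Fin.last m) = b

lemma mjpPathWeight_single {a : S} {h : Fin (m + 1) → S} (ha : h 0 = a) :
    mjpPathWeight m (Pi.single a 1) P h = transitionProd P m h := by
  subst ha
  simp [mjpPathWeight, transitionProd]

lemma transitionProd_le_bridgeMass (hP : ∀ s s', 0 ≤ P s s') (h : Fin (m + 1) → S) :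
    transitionProd P m h ≤ bridgeMass P m (h 0) (h (Fin.last m)) := by
  unfold bridgeMass mjpProb
  refine le_trans (le_of_eq ?_) (single_le_sum (fun h' _ => ?_) (mem_univ h))
  · rw [if_pos ⟨rfl, rfl⟩, mjpPathWeight_single rfl]
  · split_ifs
    · exact mjpPathWeight_nonneg (pi_single_one_nonneg _) hP h'
    · rfl

lemma bridgeMass_pathSegment_pos (hP : ∀ s s', 0 ≤ P s s') (hpm : p + m ≤ n) {ν : S → ℝ}
    {f : Fin (n + 1) → S} (hf : mjpPathWeight n ν P f ≠ 0) :
    0 < bridgeMass P m (pathSegment hpm f 0) (pathSegment hpm f (Fin.last m)) := by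
  rw [mjpPathWeight_eq_outerWeight_mul ν P hpm] at hf
  exact ((transitionProd_nonneg hP _).lt_of_ne (right_ne_zero_of_mul hf).symm).trans_le
    (transitionProd_le_bridgeMass hP _)

/-- The conditional probability that the path on `[p, p + m]` is `h`, given the states of `f`
outside `(p, p + m)`. -/
noncomputable def bridgeKernel (P : Matrix S S ℝ) (hpm : p + m ≤ n) (f : Fin (n + 1) → S)
    (h : Fin (m + 1) → S) : ℝ :=
  if h 0 = pathSegment hpm f 0 ∧ h (Fin.last m) = pathSegment hpm f (Fin.last m) then
    transitionProd P m h / bridgeMass P m (pathSegment hpm f 0) (pathSegment hpm f (Fin.last m))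
  else 0

lemma sum_mul_bridgeKernel (hpm : p + m ≤ n) (f : Fin (n + 1) → S) (G : (Fin (m + 1) → S) → ℝ) :
    ∑ h, G h * bridgeKernel P hpm f h =
      bridgeMean P m G (pathSegment hpm f 0) (pathSegment hpm f (Fin.last m)) := by
  rw [bridgeMean, mjpCondExp, sum_div]
  refine sum_congr rfl fun h _ => ?_
  unfold bridgeKernel bridgeMass
  split_ifs with hC
  · rw [mjpPathWeight_single hC.1, mul_div_assoc]
  · simp

lemma mjpPathWeight_mul_sum_bridgeKernel (hP : ∀ s s', 0 ≤ P s s') (hpm : p + m ≤ n)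
    (ν : S → ℝ) (f : Fin (n + 1) → S) :
    mjpPathWeight n ν P f * ∑ h, bridgeKernel P hpm f h = mjpPathWeight n ν P f := by
  rcases eq_or_ne (mjpPathWeight n ν P f) 0 with hf | hf
  · rw [hf, zero_mul]
  · have hsum := sum_mul_bridgeKernel (P := P) hpm f fun _ => 1
    simp only [one_mul] at hsum
    rw [hsum, bridgeMean, mjpCondExp_const (bridgeMass_pathSegment_pos hP hpm hf).ne', mul_one]

/-- Detailed balance of the involution `(f, h) ↦ (pathSplice p f h, pathSegment hpm f)`. -/
lemma mjpPathWeight_pathSplice_mul_bridgeKernel (hpm : p + m ≤ n) (ν : S → ℝ)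
    (f : Fin (n + 1) → S) (h : Fin (m + 1) → S) :
    mjpPathWeight n ν P (pathSplice p f h) * bridgeKernel P hpm (pathSplice p f h)
        (pathSegment hpm f) = mjpPathWeight n ν P f * bridgeKernel P hpm f h := by
  unfold bridgeKernel
  rw [pathSegment_pathSplice]
  by_cases hC : h 0 = pathSegment hpm f 0 ∧ h (Fin.last m) = pathSegment hpm f (Fin.last m)
  · rw [if_pos ⟨hC.1.symm, hC.2.symm⟩, if_pos hC, hC.1, hC.2,
      mjpPathWeight_eq_outerWeight_mul ν P hpm (pathSplice p f h),
      mjpPathWeight_eq_outerWeight_mul ν P hpm f, outerWeight_pathSplice ν P hpm hC.1 hC.2,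
      pathSegment_pathSplice]
    ring
  · rw [if_neg fun H => hC ⟨H.1.symm, H.2.symm⟩, if_neg hC, mul_zero, mul_zero]

theorem mjpCondExp_comp_pathSegment (hP : ∀ s s', 0 ≤ P s s') (hpm : p + m ≤ n) {ν : S → ℝ}
    {E : (Fin (n + 1) → S) → Prop}
    (hE : ∀ f g : Fin (n + 1) → S,
      (∀ i : Fin (n + 1), (i : ℕ) ≤ p ∨ p + m ≤ i → f i = g i) → (E f ↔ E g))
    (G : (Fin (m + 1) → S) → ℝ) :
    mjpCondExp n ν P (fun f => G (pathSegment hpm f)) E =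
      mjpCondExp n ν P
        (fun f => bridgeMean P m G (pathSegment hpm f 0) (pathSegment hpm f (Fin.last m))) E := by
  classical
  unfold mjpCondExp
  congr 1
  let Ψ : (Fin (n + 1) → S) → (Fin (m + 1) → S) → ℝ := fun f h =>
    if E f then G h * (mjpPathWeight n ν P f * bridgeKernel P hpm f h) else 0
  have hswap (f h) : Ψ (pathSplice p f h) (pathSegment hpm f) =
      if E f then G (pathSegment hpm f) * (mjpPathWeight n ν P f * bridgeKernel P hpm f h)
      else 0 := by
    simp only [Ψ, mjpPathWeight_pathSplice_mul_bridgeKernel]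
    by_cases hC : h 0 = pathSegment hpm f 0 ∧ h (Fin.last m) = pathSegment hpm f (Fin.last m)
    · exact if_congr (hE _ _ fun i hi => pathSplice_apply_of_le_or_le hpm hC.1 hC.2 hi) rfl rfl
    · simp [bridgeKernel, hC]
  -- Detailed balance turns the left side into the sum of `Ψ` composed with the involution.
  calc
    _ = ∑ f, ∑ h, Ψ (pathSplice p f h) (pathSegment hpm f) := sum_congr rfl fun f _ => by
      simp only [hswap]
      split_ifs <;> simp [← mul_sum, mjpPathWeight_mul_sum_bridgeKernel hP]
    _ = ∑ f, ∑ h, Ψ f h := sum_pathSplice_pathSegment hpm Ψ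
    _ = _ := sum_congr rfl fun f _ => by
      simp only [Ψ]
      split_ifs
      · rw [← sum_mul_bridgeKernel, sum_mul]
        exact sum_congr rfl fun h _ => by ring
      · exact sum_const_zero

end Bridge

theorem exists_long_gap : ∀ {k : ℕ} (t : Fin k → ℕ), Monotone t → ∀ n, (∀ j, t j ≤ n) →
    ∃ p m, p + m ≤ n ∧ n ≤ (k + 1) * m ∧ ∀ j, t j ≤ p ∨ p + m ≤ t j
  | 0, _, _, n, _ => ⟨0, n, by omega, by omega, fun j => j.elim0⟩
  | k + 1, t, ht, n, htn => by
    set l := t (Fin.last k)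
    obtain ⟨d, rfl⟩ : ∃ d, n = l + d := ⟨n - l, by have := htn (Fin.last k); omega⟩
    by_cases hlast : l + d ≤ (k + 2) * d
    · exact ⟨l, d, le_rfl, hlast, fun j => Or.inl (ht (Fin.le_last j))⟩
    · obtain ⟨p, m, hpm, hm, hgap⟩ :=
        exists_long_gap (fun j => t j.castSucc) (ht.comp Fin.strictMono_castSucc.monotone) l
          fun j => ht (Fin.le_last _)
      have hdm : d < m := Nat.lt_of_mul_lt_mul_left (a := k + 1) (by linarith)
      refine ⟨p, m, by omega, by linarith, Fin.lastCases (Or.inr (by omega)) hgap⟩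

lemma one_sub_mul_add_sub_le {δ k m n : ℝ} (hδ : 0 ≤ δ) (hk : 0 ≤ k) (hnm : n ≤ (k + 1) * m) :
    (1 - δ) * m + (n - m) ≤ (1 - δ / (k + 1)) * n := by
  have hδm : δ * n / (k + 1) ≤ δ * m := by
    rw [div_le_iff₀ (by positivity)]
    linarith [mul_le_mul_of_nonneg_left hnm hδ]
  rw [show (1 - δ / (k + 1)) * n = n - δ * n / (k + 1) by ring]
  linarith

theorem jump_bound_given_observation_event_general
    {S : Type*} [Fintype S] [DecidableEq S]
    (P : Matrix S S ℝ)
    (hPnn : ∀ s s' : S, 0 ≤ P s s')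
    (n₀ : ℕ) (δ : ℝ) (hδ : 0 < δ)
    (hbound : ∀ (μ : S → ℝ), (∀ s, 0 ≤ μ s) → (∑ s, μ s = 1) →
      ∀ m : ℕ, n₀ ≤ m → ∀ a b : S,
        0 < mjpProb m μ P (fun f => f 0 = a ∧ f (Fin.last m) = b) →
        mjpCondExp m μ P (fun f => (numJumps m f : ℝ))
            (fun f => f 0 = a ∧ f (Fin.last m) = b) ≤ (1 - δ) * m)
    (ν : S → ℝ) (hν0 : ∀ s, 0 ≤ ν s)
    (k n : ℕ) (hn : (k + 1) * n₀ ≤ n)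
    (idx : Fin k → Fin (n + 1)) (hidx : Monotone idx)
    (B : (Fin k → S) → Prop)
    (hpos : 0 < mjpProb n ν P (fun f => B (fun j => f (idx j)))) :
    mjpCondExp n ν P (fun f => (numJumps n f : ℝ))
        (fun f => B (fun j => f (idx j)))
      ≤ (1 - δ / (k + 1)) * n := by
  obtain ⟨p, m, hpm, hnm, hgap⟩ :=
    exists_long_gap (fun j => (idx j : ℕ)) (fun _ _ hij => hidx hij) n fun j => Fin.is_le _
  have hm₀ : n₀ ≤ m := Nat.le_of_mul_le_mul_left (hn.trans hnm) k.succ_pos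
  have hE (f g : Fin (n + 1) → S) (hfg : ∀ i : Fin (n + 1), (i : ℕ) ≤ p ∨ p + m ≤ i → f i = g i) :
      B (fun j => f (idx j)) ↔ B (fun j => g (idx j)) := by
    simp only [hfg _ (hgap _)]
  let G : (Fin (m + 1) → S) → ℝ := fun h => numJumps m h + (n - m : ℕ)
  have hbridge (a b : S) (hab : 0 < bridgeMass P m a b) :
      bridgeMean P m G a b ≤ (1 - δ) * m + (n - m : ℕ) := by
    rw [bridgeMean, mjpCondExp_add_const hab.ne']
    exact add_le_add_left (hbound _ (pi_single_one_nonneg a) (by simp) m hm₀ a b hab) _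
  calc _ ≤ mjpCondExp n ν P (fun f => G (pathSegment hpm f)) _ :=
        mjpCondExp_mono hν0 hPnn fun f _ _ => by
          simp only [G]
          exact_mod_cast numJumps_le_pathSegment_add hpm f
    _ = mjpCondExp n ν P (fun f => bridgeMean P m G (pathSegment hpm f 0)
          (pathSegment hpm f (Fin.last m))) _ := mjpCondExp_comp_pathSegment hPnn hpm hE G
    _ ≤ mjpCondExp n ν P (fun _ => (1 - δ) * m + (n - m : ℕ)) _ :=
        mjpCondExp_mono hν0 hPnn fun f _ hf => hbridge _ _ (bridgeMass_pathSegment_pos hPnn hpm hf)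
    _ = (1 - δ) * m + (n - m : ℕ) := mjpCondExp_const hpos.ne' _
    _ ≤ (1 - δ / (k + 1)) * n := by
      rw [Nat.cast_sub (by omega)]
      exact one_sub_mul_add_sub_le hδ.le k.cast_nonneg (by exact_mod_cast hnm)

/-- **Jump bound given an event measurable w.r.t. `(S_{i₁},…,S_{i_k})`.**
Let `P` be irreducible and stochastic with `P(s,s) ≥ η > 0`, and let `n₀`, `δ > 0`
satisfy the two-endpoint jump bound. Fix `k`, monotone indices
`0 ≤ i₁ ≤ ⋯ ≤ i_k ≤ n` with `n ≥ (k+1)·n₀`, and let `E` be any positive-probability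
event determined by the values of the chain at the indices `i₁, …, i_k`
(encoded as `E f ↔ B (f ∘ idx)` for a predicate `B` on `Fin k → S`).
Then `E(|J| | E) ≤ (1 - δ/(k+1)) n`. -/
theorem jump_bound_given_observation_event
    {S : Type*} [Fintype S] [DecidableEq S]
    (P : Matrix S S ℝ) (η : ℝ)
    (hPnn : ∀ s s' : S, 0 ≤ P s s')
    (hProw : ∀ s : S, ∑ s' : S, P s s' = 1)
    (hirr : ∀ s s' : S, ∃ m : ℕ, 0 < (P ^ m) s s')
    (hη : 0 < η) (hdiag : ∀ s : S, η ≤ P s s)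
    (n₀ : ℕ) (δ : ℝ) (hδ : 0 < δ)
    (hbound : ∀ (μ : S → ℝ), (∀ s, 0 ≤ μ s) → (∑ s, μ s = 1) →
      ∀ m : ℕ, n₀ ≤ m → ∀ a b : S,
        0 < mjpProb m μ P (fun f => f 0 = a ∧ f (Fin.last m) = b) →
        mjpCondExp m μ P (fun f => (numJumps m f : ℝ))
            (fun f => f 0 = a ∧ f (Fin.last m) = b) ≤ (1 - δ) * m)
    (ν : S → ℝ) (hν0 : ∀ s, 0 ≤ ν s) (hν1 : ∑ s, ν s = 1)
    (k n : ℕ) (hn : (k + 1) * n₀ ≤ n)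
    (idx : Fin k → Fin (n + 1)) (hidx : Monotone idx)
    (B : (Fin k → S) → Prop)
    (hpos : 0 < mjpProb n ν P (fun f => B (fun j => f (idx j)))) :
    mjpCondExp n ν P (fun f => (numJumps n f : ℝ))
        (fun f => B (fun j => f (idx j)))
      ≤ (1 - δ / (k + 1)) * n :=
  jump_bound_given_observation_event_general P hPnn n₀ δ hδ hbound ν hν0 k n hn idx hidx B hpos
end
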